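/- (Result 1, fourth moment condition and identification of κ0) E[μ*_t · (Ȳ_t − κ0 · μ*_t)] = 0; consequently, if E[(μ*_t)²] > 0 then κ0 is uniquely identified as κ0 = E[μ*_t · Ȳ_t] / E[(μ*_t)²]. -/

import Mathlib

open MeasureTheory Finset

private lemma mul_int_aux {Ω : Type*} [MeasurableSpace Ω] {P : Measure Ω} {f g : Ω → ℝ}
    (hf : MemLp f 2 P) (hg : MemLp g 2 P) :
    Integrable (fun ω => f ω * g ω) P := by
  exact hf.integrable_mul hg

/-- Result 1, fourth moment condition and identification of κ0:
E[μ*_t · (Ȳ_t − κ0 μ*_t)] = 0; consequently, if E[(μ*_t)²] > 0 then κ0 is uniquely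
identified as κ0 = E[μ*_t Ȳ_t] / E[(μ*_t)²]. -/
theorem statement2
    {Ω : Type*} [MeasurableSpace Ω] (P : Measure Ω) [IsProbabilityMeasure P]
    (T : ℕ) (hT : 2 ≤ T) (t : Fin T)
    (μ ε η : Fin T → Ω → ℝ)
    (hμL2 : ∀ s, MemLp (μ s) 2 P) (hεL2 : ∀ s, MemLp (ε s) 2 P)
    (hηL2 : ∀ s, MemLp (η s) 2 P)
    (hμ0 : ∀ s, ∫ ω, μ s ω ∂P = 0) (hε0 : ∀ s, ∫ ω, ε s ω ∂P = 0)
    (hη0 : ∀ s, ∫ ω, η s ω ∂P = 0)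
    (R : Fin T → Ω → ℝ) (hR : ∀ s ω, R s ω = μ s ω + ε s ω)
    (hsort1 : ∀ s u, ∫ ω, ε s ω * μ u ω ∂P = 0)
    (hsort2 : ∀ s, s ≠ t → ∫ ω, η t ω * μ s ω ∂P = 0)
    (hsort3 : ∀ s, s ≠ t → ∫ ω, η t ω * ε s ω ∂P = 0)
    (hsort4 : ∀ s, s ≠ t → ∫ ω, ε t ω * ε s ω ∂P = 0)
    (φ : Fin T → ℝ)
    (hNE : ∀ u, u ≠ t →
      ∫ ω, R u ω * (R t ω - ∑ s ∈ univ.erase t, φ s * R s ω) ∂P = 0)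
    (μstar : Ω → ℝ) (hμstar : ∀ ω, μstar ω = ∑ s ∈ univ.erase t, φ s * R s ω)
    (κ0 : ℝ) (Y : Ω → ℝ) (hY : ∀ ω, Y ω = κ0 * μ t ω + η t ω) :
    (∫ ω, μstar ω * (Y ω - κ0 * μstar ω) ∂P = 0) ∧
    (0 < ∫ ω, μstar ω ^ 2 ∂P →
      κ0 = (∫ ω, μstar ω * Y ω ∂P) / ∫ ω, μstar ω ^ 2 ∂P ∧
      ∀ κ : ℝ, (∫ ω, μstar ω * (Y ω - κ * μstar ω) ∂P = 0) → κ = κ0) := by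
  have comm : ∀ f g : Ω → ℝ, ∫ ω, f ω * g ω ∂P = ∫ ω, g ω * f ω ∂P := by
    intro f g; simp_rw [mul_comm]
  have hRL2 : ∀ s, MemLp (R s) 2 P := by
    intro s
    have e : R s = fun ω => μ s ω + ε s ω := funext (hR s)
    rw [e]; exact (hμL2 s).add (hεL2 s)
  have hμstarL2 : MemLp μstar 2 P := by
    have e : μstar = fun ω => ∑ s ∈ univ.erase t, φ s * R s ω := funext hμstar
    rw [e]
    exact memLp_finset_sum _ fun i _ => (hRL2 i).const_mul (φ i)
  have hYL2 : MemLp Y 2 P := by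
    have e : Y = fun ω => κ0 * μ t ω + η t ω := funext hY
    rw [e]; exact ((hμL2 t).const_mul κ0).add (hηL2 t)
  -- expansion of integrals against μstar
  have expand : ∀ g : Ω → ℝ, MemLp g 2 P →
      ∫ ω, μstar ω * g ω ∂P = ∑ s ∈ univ.erase t, φ s * ∫ ω, R s ω * g ω ∂P := by
    intro g hg
    have e : (fun ω => μstar ω * g ω)
        = fun ω => ∑ s ∈ univ.erase t, φ s * (R s ω * g ω) := by
      funext ω; rw [hμstar, sum_mul]
      exact Finset.sum_congr rfl fun s _ => by ring
    rw [e, integral_finset_sum _ fun i _ => (mul_int_aux (hRL2 i) hg).const_mul (φ i)]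
    exact Finset.sum_congr rfl fun s _ => integral_const_mul _ _
  -- E[μ* η_t] = 0
  have hμη : ∫ ω, μstar ω * η t ω ∂P = 0 := by
    rw [expand _ (hηL2 t)]
    refine Finset.sum_eq_zero fun s hs => ?_
    have hst : s ≠ t := (Finset.mem_erase.mp hs).1
    have e : (fun ω => R s ω * η t ω)
        = fun ω => μ s ω * η t ω + ε s ω * η t ω := funext fun ω => by rw [hR]; ring
    rw [e, integral_add (mul_int_aux (hμL2 s) (hηL2 t)) (mul_int_aux (hεL2 s) (hηL2 t)),
      comm (μ s) (η t), comm (ε s) (η t), hsort2 s hst, hsort3 s hst]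
    simp
  -- E[μ* ε_t] = 0
  have hμε : ∫ ω, μstar ω * ε t ω ∂P = 0 := by
    rw [expand _ (hεL2 t)]
    refine Finset.sum_eq_zero fun s hs => ?_
    have hst : s ≠ t := (Finset.mem_erase.mp hs).1
    have e : (fun ω => R s ω * ε t ω)
        = fun ω => μ s ω * ε t ω + ε s ω * ε t ω := funext fun ω => by rw [hR]; ring
    rw [e, integral_add (mul_int_aux (hμL2 s) (hεL2 t)) (mul_int_aux (hεL2 s) (hεL2 t)),
      comm (μ s) (ε t), comm (ε s) (ε t), hsort1 t s, hsort4 s hst]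
    simp
  -- E[μ* R_t] = E[μ*²]
  have hDL2 : MemLp (fun ω => R t ω - μstar ω) 2 P := (hRL2 t).sub hμstarL2
  have hNEsum : ∫ ω, μstar ω * (R t ω - μstar ω) ∂P = 0 := by
    rw [expand _ hDL2]
    refine Finset.sum_eq_zero fun s hs => ?_
    have hst : s ≠ t := (Finset.mem_erase.mp hs).1
    have h := hNE s hst
    simp only [← hμstar] at h
    rw [h, mul_zero]
  have hμR : ∫ ω, μstar ω * R t ω ∂P = ∫ ω, μstar ω ^ 2 ∂P := by
    have e : (fun ω => μstar ω * (R t ω - μstar ω))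
        = fun ω => μstar ω * R t ω - μstar ω ^ 2 := funext fun ω => by ring
    rw [e, integral_sub (mul_int_aux hμstarL2 (hRL2 t)) hμstarL2.integrable_sq] at hNEsum
    linarith
  -- E[μ* μ_t] = E[μ*²]
  have hμμ : ∫ ω, μstar ω * μ t ω ∂P = ∫ ω, μstar ω ^ 2 ∂P := by
    have e : (fun ω => μstar ω * R t ω)
        = fun ω => μstar ω * μ t ω + μstar ω * ε t ω := funext fun ω => by rw [hR]; ring
    rw [e, integral_add (mul_int_aux hμstarL2 (hμL2 t)) (mul_int_aux hμstarL2 (hεL2 t)),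
      hμε, add_zero] at hμR
    exact hμR
  -- E[μ* Y] = κ0 E[μ*²]
  have hμY : ∫ ω, μstar ω * Y ω ∂P = κ0 * ∫ ω, μstar ω ^ 2 ∂P := by
    have e : (fun ω => μstar ω * Y ω)
        = fun ω => κ0 * (μstar ω * μ t ω) + μstar ω * η t ω :=
      funext fun ω => by rw [hY]; ring
    rw [e, integral_add ((mul_int_aux hμstarL2 (hμL2 t)).const_mul κ0)
      (mul_int_aux hμstarL2 (hηL2 t)), integral_const_mul, hμμ, hμη, add_zero]
  have hkey : ∀ κ : ℝ, ∫ ω, μstar ω * (Y ω - κ * μstar ω) ∂P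
      = (∫ ω, μstar ω * Y ω ∂P) - κ * ∫ ω, μstar ω ^ 2 ∂P := by
    intro κ
    have e : (fun ω => μstar ω * (Y ω - κ * μstar ω))
        = fun ω => μstar ω * Y ω - κ * μstar ω ^ 2 := funext fun ω => by ring
    rw [e, integral_sub (mul_int_aux hμstarL2 hYL2) (hμstarL2.integrable_sq.const_mul κ),
      integral_const_mul]
  refine ⟨by rw [hkey κ0, hμY]; ring, fun hpos => ⟨?_, fun κ hκ => ?_⟩⟩
  · rw [hμY]; field_simp
  · rw [hkey κ, hμY] at hκ
    have := sub_eq_zero.mp hκ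
    exact mul_right_cancel₀ (ne_of_gt hpos) this.symm
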